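/- Let A be a finite alphabet with at least two letters, u ∈ A⁺ a nonempty word, π a permutation of A, w a prefix of Pal(u), and let σ be the w-conjugate of ψ_u ∘ π; assume σ is primitive, and let a_min be the minimal letter of σ. Then: (1) if |w| = |σ(a_min)|, then for every word v that is left special in L(σ), the word σ(a_min·v) is left special in L(σ); and (2) if (card A − 1)·|w| = ‖σ‖ − card A, then for every word v that is right special in L(σ), the word σ(a_min·v) belongs to L(σ) and is right special in L(σ). -/

import Mathlib

open List

section EpiDefs

variable {A : Type*}

/-- The episturmian generator ψ_a : a ↦ a, b ↦ ab for b ≠ a, as a map on words. -/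
def psiL [DecidableEq A] (a : A) : List A → List A :=
  fun u => (u.map (fun b => if b = a then [a] else [a, b])).flatten

/-- The episturmian generator ψ̄_a : a ↦ a, b ↦ ba for b ≠ a, as a map on words. -/
def psibarL [DecidableEq A] (a : A) : List A → List A :=
  fun u => (u.map (fun b => if b = a then [a] else [b, a])).flatten

/-- ψ_{u₁⋯uₙ} = ψ_{u₁} ∘ ⋯ ∘ ψ_{uₙ}. -/
def psiW [DecidableEq A] (u : List A) : List A → List A :=
  u.foldr (fun a f => psiL a ∘ f) id

/-- ψ̄_{u₁⋯uₙ} = ψ̄_{u₁} ∘ ⋯ ∘ ψ̄_{uₙ}. -/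
def psibarW [DecidableEq A] (u : List A) : List A → List A :=
  u.foldr (fun a f => psibarL a ∘ f) id

/-- There is a shortest palindrome having `x` as a prefix. -/
theorem exists_isPalClosure (x : List A) :
    ∃ p : List A, (p.reverse = p ∧ x <+: p) ∧
      ∀ q : List A, q.reverse = q → x <+: q → p.length ≤ q.length := by
  classical
  have hex : ∃ n : ℕ, ∃ p : List A, (p.reverse = p ∧ x <+: p) ∧ p.length = n :=
    ⟨(x ++ x.reverse).length, x ++ x.reverse, ⟨by simp, ⟨x.reverse, rfl⟩⟩, rfl⟩
  obtain ⟨p, hp, hlen⟩ := Nat.find_spec hex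
  refine ⟨p, hp, fun q h1 h2 => ?_⟩
  rw [hlen]
  exact Nat.find_le ⟨q, ⟨h1, h2⟩, rfl⟩

/-- `palPlus x = x⁽⁺⁾` is the shortest palindrome having `x` as a prefix. -/
noncomputable def palPlus (x : List A) : List A :=
  Classical.choose (exists_isPalClosure x)

/-- Iterated palindromic closure: Pal(ε) = ε, Pal(ua) = (Pal(u)a)⁽⁺⁾. -/
noncomputable def pal (u : List A) : List A :=
  u.foldl (fun p a => palPlus (p ++ [a])) []

/-- Longest common prefix. -/
def gcp [DecidableEq A] : List A → List A → List A
  | a :: x, b :: y => if a = b then a :: gcp x y else []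
  | _, _ => []

/-- Longest common suffix. -/
def gcs [DecidableEq A] (x y : List A) : List A :=
  (gcp x.reverse y.reverse).reverse

/-- The language of a (primitive) substitution: factors of σⁿ(a). -/
def LangS (σ : List A → List A) : Set (List A) :=
  {x | ∃ (n : ℕ) (a : A), x <:+: σ^[n] [a]}

/-- The language of the episturmian shift directed by `d`. -/
def LangD (d : ℕ → A) : Set (List A) :=
  {x | ∃ n : ℕ, x <:+: pal ((List.range n).map d)}

def LeftSpecial (L : Set (List A)) (v : List A) : Prop :=
  ∃ a b : A, a ≠ b ∧ a :: v ∈ L ∧ b :: v ∈ L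

def RightSpecial (L : Set (List A)) (v : List A) : Prop :=
  ∃ a b : A, a ≠ b ∧ v ++ [a] ∈ L ∧ v ++ [b] ∈ L

/-- The left return set of `u` in the language `L`. -/
def leftReturn (L : Set (List A)) (u : List A) : Set (List A) :=
  {r | r ++ u ∈ L ∧ (∃ s : List A, s ≠ [] ∧ r ++ u = u ++ s) ∧
    ¬∃ p q : List A, p ≠ [] ∧ q ≠ [] ∧ r ++ u = p ++ u ++ q}

/-- The right return set of `u` in the language `L`. -/
def rightReturn (L : Set (List A)) (u : List A) : Set (List A) :=
  {r | u ++ r ∈ L ∧ (∃ p : List A, p ≠ [] ∧ u ++ r = p ++ u) ∧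
    ¬∃ p q : List A, p ≠ [] ∧ q ≠ [] ∧ u ++ r = p ++ u ++ q}

/-- `σ` is an endomorphism of the free monoid A*. -/
def IsListHom (σ : List A → List A) : Prop :=
  ∀ x y : List A, σ (x ++ y) = σ x ++ σ y

/-- Primitivity of a substitution. -/
def IsPrimitiveSubst (σ : List A → List A) : Prop :=
  ∃ k : ℕ, 1 ≤ k ∧ ∀ a b : A, b ∈ σ^[k] [a]

/-- At least two distinct letters occur infinitely often in `d`. -/
def NonDegenerate (d : ℕ → A) : Prop :=
  ∃ a b : A, a ≠ b ∧ (∀ N : ℕ, ∃ n : ℕ, N ≤ n ∧ d n = a) ∧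
    (∀ N : ℕ, ∃ n : ℕ, N ≤ n ∧ d n = b)

end EpiDefs

section Lem
variable {A : Type*} [DecidableEq A]

theorem psiL_append (a : A) (x y : List A) : psiL a (x ++ y) = psiL a x ++ psiL a y := by
  simp [psiL]

theorem psiL_nil (a : A) : psiL a [] = [] := rfl

theorem psiL_single (a b : A) : psiL a [b] = if b = a then [a] else [a, b] := by
  simp [psiL]

theorem psiL_cons (a b : A) (z : List A) :
    psiL a (b :: z) = (if b = a then [a] else [a, b]) ++ psiL a z := by
  simp [psiL]

theorem psiW_nil : psiW ([] : List A) = id := rfl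

theorem psiW_cons (x : A) (u : List A) : psiW (x :: u) = psiL x ∘ psiW u := rfl

theorem psiW_append (u v : List A) : psiW (u ++ v) = psiW u ∘ psiW v := by
  induction u with
  | nil => rfl
  | cons x u ih => simp [psiW_cons, ih, Function.comp_assoc]

theorem psiW_hom (u : List A) (x y : List A) : psiW u (x ++ y) = psiW u x ++ psiW u y := by
  induction u generalizing x y with
  | nil => rfl
  | cons z u ih => simp [psiW_cons, ih, psiL_append]

theorem psiL_length_ge (a : A) (z : List A) : z.length ≤ (psiL a z).length := by
  induction z with
  | nil => simp [psiL]
  | cons b z ih =>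
    rw [psiL_cons, length_append]
    split <;> simp <;> omega

theorem psiL_length_le (a : A) (z : List A) : (psiL a z).length ≤ 2 * z.length := by
  induction z with
  | nil => simp [psiL]
  | cons b z ih =>
    rw [psiL_cons, length_append]
    split <;> simp <;> omega

theorem psiL_ne_nil (a : A) (z : List A) (hz : z ≠ []) : psiL a z ≠ [] := by
  intro h
  have := psiL_length_ge a z
  rw [h] at this
  simp at this
  exact hz (by simpa using List.length_eq_zero_iff.mp (Nat.le_zero.mp (this ▸ le_refl _)) )

theorem psiL_head (a b : A) (z : List A) : ∃ t, psiL a (b :: z) = a :: t := by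
  rw [psiL_cons]
  split <;> exact ⟨_, rfl⟩

theorem psiW_single_concat (u : List A) (c : A) : ∃ z, psiW u [c] = z ++ [c] := by
  induction u with
  | nil => exact ⟨[], rfl⟩
  | cons x u ih =>
    obtain ⟨z, hz⟩ := ih
    rw [psiW_cons, Function.comp_apply, hz, psiL_append, psiL_single]
    by_cases h : c = x
    · subst h; exact ⟨psiL c z, by simp⟩
    · exact ⟨psiL x z ++ [x], by simp [h]⟩

theorem psiW_ne_nil (u : List A) (c : A) : psiW u [c] ≠ [] := by
  obtain ⟨z, hz⟩ := psiW_single_concat u c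
  simp [hz]

end Lem

section Pal
variable {A : Type*}

theorem palPlus_spec (x : List A) :
    ((palPlus x).reverse = palPlus x ∧ x <+: palPlus x) ∧
      ∀ q : List A, q.reverse = q → x <+: q → (palPlus x).length ≤ q.length :=
  Classical.choose_spec (exists_isPalClosure x)

theorem palPlus_rev (x : List A) : (palPlus x).reverse = palPlus x := (palPlus_spec x).1.1
theorem palPlus_prefix (x : List A) : x <+: palPlus x := (palPlus_spec x).1.2
theorem palPlus_min (x : List A) {q : List A} (h1 : q.reverse = q) (h2 : x <+: q) :
    (palPlus x).length ≤ q.length := (palPlus_spec x).2 q h1 h2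

theorem cand_pal (x : List A) (k : ℕ) (h : (x.drop k).reverse = x.drop k) :
    (x ++ (x.take k).reverse).reverse = x ++ (x.take k).reverse := by
  conv_lhs => rw [reverse_append, reverse_reverse,
    show x.reverse = (x.take k ++ x.drop k).reverse by rw [take_append_drop],
    reverse_append, h]
  rw [← append_assoc, take_append_drop]

theorem palPlus_length_le (x : List A) (k : ℕ) (hk : k ≤ x.length)
    (h : (x.drop k).reverse = x.drop k) : (palPlus x).length ≤ x.length + k := by
  have := palPlus_min x (cand_pal x k h) (prefix_append _ _)
  simpa [Nat.min_eq_left hk] using this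

theorem palPlus_length_le2 (x : List A) : (palPlus x).length ≤ 2 * x.length := by
  have := palPlus_length_le x x.length le_rfl (by simp)
  omega

theorem pal_prefix_struct (x P : List A) (hP : P.reverse = P) (hpre : x <+: P)
    (hlen : P.length ≤ 2 * x.length) :
    P = x ++ (x.take (P.length - x.length)).reverse ∧
      (x.drop (P.length - x.length)).reverse = x.drop (P.length - x.length) := by
  obtain ⟨m, rfl⟩ := hpre
  have hk : m.length ≤ x.length := by
    have := hlen; simp [length_append] at this ⊢; omega
  have hkk : (x ++ m).length - x.length = m.length := by simp
  rw [hkk]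
  have hrev : x.reverse = x.drop m.length ++ m := by
    have h1 : x.reverse = (m.reverse ++ x.reverse).drop m.length := by
      rw [List.drop_append]; simp
    rw [h1, show m.reverse ++ x.reverse = x ++ m by rw [← reverse_append, hP],
      List.drop_append, Nat.sub_eq_zero_of_le hk, drop_zero]
  constructor
  · have hm : m = x.reverse.drop (x.length - m.length) := by
      rw [hrev, List.drop_append, drop_eq_nil_of_le (by simp),
        Nat.sub_eq_zero_of_le (by simp), drop_zero, nil_append]
    rw [reverse_take]
    exact congrArg (x ++ ·) hm
  · have hd : x.drop m.length = x.reverse.take (x.length - m.length) := by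
      rw [hrev, List.take_append, take_of_length_le (by simp),
        Nat.sub_eq_zero_of_le (by simp), take_zero, append_nil]
    rw [reverse_drop]
    exact hd.symm

theorem palPlus_eq_of (q R : List A) (hR : R.reverse = R) (hpre : q <+: R)
    (hle : R.length ≤ 2 * q.length)
    (hmin : ∀ Q : List A, Q.reverse = Q → q <+: Q → R.length ≤ Q.length) :
    palPlus q = R := by
  have h1 : (palPlus q).length ≤ R.length := palPlus_min q hR hpre
  have h2 : R.length ≤ (palPlus q).length := hmin _ (palPlus_rev q) (palPlus_prefix q)
  have hlen : (palPlus q).length = R.length := le_antisymm h1 h2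
  have s1 := (pal_prefix_struct q (palPlus q) (palPlus_rev q) (palPlus_prefix q)
    (by omega)).1
  have s2 := (pal_prefix_struct q R hR hpre hle).1
  rw [s1, s2, hlen]

end Pal

section PsiPal
variable {A : Type*} [DecidableEq A]

theorem psiL_rev (a : A) (z : List A) :
    (psiL a z ++ [a]).reverse = psiL a z.reverse ++ [a] := by
  induction z with
  | nil => simp [psiL]
  | cons b z ih =>
    rw [psiL_cons, append_assoc, reverse_append, ih, reverse_cons, psiL_append, psiL_single]
    by_cases h : b = a
    · simp [h]
    · simp [h]

theorem psiL_pal (a : A) (z : List A) (hz : z.reverse = z) :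
    (psiL a z ++ [a]).reverse = psiL a z ++ [a] := by
  rw [psiL_rev, hz]

theorem psiL_inj (a : A) : ∀ t t' : List A, psiL a t = psiL a t' → t = t' := by
  intro t
  induction t with
  | nil =>
    intro t' h
    cases t' with
    | nil => rfl
    | cons b t' =>
      exfalso
      rw [psiL_nil, psiL_cons] at h
      have hl := congrArg List.length h
      rw [length_append] at hl
      split at hl <;> simp at hl <;> omega
  | cons b t ih =>
    intro t' h
    cases t' with
    | nil =>
      exfalso
      rw [psiL_nil, psiL_cons] at h
      have hl := congrArg List.length h
      rw [length_append] at hl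
      split at hl <;> simp at hl <;> omega
    | cons b' t' =>
      rw [psiL_cons, psiL_cons] at h
      by_cases hb : b = a <;> by_cases hb' : b' = a
      · rw [if_pos hb, if_pos hb'] at h
        have h2 : psiL a t = psiL a t' := by simpa using h
        rw [hb, hb', ih _ h2]
      · rw [if_pos hb, if_neg hb'] at h
        exfalso
        have h2 : psiL a t = b' :: psiL a t' := by simpa using h
        cases t with
        | nil => rw [psiL_nil] at h2; simp at h2
        | cons e r =>
          obtain ⟨s, hs⟩ := psiL_head a e r
          rw [hs] at h2
          injection h2 with h3 _
          exact hb' h3.symm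
      · rw [if_neg hb, if_pos hb'] at h
        exfalso
        have h2 : b :: psiL a t = psiL a t' := by simpa using h
        cases t' with
        | nil =>
          rw [psiL_nil] at h2
          simp at h2
        | cons e r =>
          obtain ⟨s, hs⟩ := psiL_head a e r
          rw [hs] at h2
          injection h2 with h3 _
          exact hb h3
      · rw [if_neg hb, if_neg hb'] at h
        have h2 : b = b' ∧ psiL a t = psiL a t' := by
          simpa using h
        rw [h2.1, ih _ h2.2]

theorem psiL_length_rev (a : A) (z : List A) :
    (psiL a z.reverse).length = (psiL a z).length := by
  induction z with
  | nil => rfl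
  | cons b z ih =>
    by_cases h : b = a <;>
      simp [reverse_cons, psiL_append, psiL_single, psiL_cons, psiL_nil, h] <;> omega

theorem suffix_append_split {s x y : List A} (h : s <:+ x ++ y) :
    s <:+ y ∨ ∃ s', s' <:+ x ∧ s' ≠ [] ∧ s = s' ++ y := by
  by_cases hlen : s.length ≤ y.length
  · exact Or.inl (List.suffix_of_suffix_length_le h (suffix_append _ _) hlen)
  · push_neg at hlen
    have hy : y <:+ s := List.suffix_of_suffix_length_le (suffix_append _ _) h (le_of_lt hlen)
    obtain ⟨s', rfl⟩ := hy
    obtain ⟨v, hv⟩ := h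
    rw [← append_assoc] at hv
    have hx : v ++ s' = x := append_cancel_right hv
    refine Or.inr ⟨s', ⟨v, hx⟩, ?_, rfl⟩
    intro hnil
    rw [hnil] at hlen
    simp at hlen

/-- Every suffix of ψ_a(z)·a beginning with `a` has the form ψ_a(t)·a for a suffix t of z. -/
theorem psiL_suffix_a (a : A) (z : List A) : ∀ s : List A,
    (a :: s) <:+ psiL a z ++ [a] → ∃ t, t <:+ z ∧ a :: s = psiL a t ++ [a] := by
  induction z with
  | nil =>
    intro s hs
    rw [psiL_nil, nil_append] at hs
    have hl : s.length = 0 := by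
      have h1 := hs.length_le
      simp only [length_cons, length_nil] at h1
      omega
    rw [List.length_eq_zero_iff] at hl
    subst hl
    exact ⟨[], suffix_rfl, by simp [psiL_nil]⟩
  | cons b z ih =>
    intro s hs
    rw [psiL_cons, append_assoc] at hs
    rcases suffix_append_split hs with h | ⟨s', hs'x, hs'ne, hse⟩
    · obtain ⟨t, ht, he⟩ := ih s h
      exact ⟨t, ht.trans (suffix_cons b z), he⟩
    · obtain ⟨w, hw⟩ := hs'x
      by_cases hb : b = a
      · subst hb
        rw [if_pos rfl] at hw
        have hs'e : s' = [b] := by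
          cases w with
          | nil => simpa using hw
          | cons x w =>
            exfalso
            have h1 := congrArg List.length hw
            simp only [length_append, length_cons, length_nil] at h1
            have h2 : s'.length ≠ 0 := by simpa [List.length_eq_zero_iff] using hs'ne
            omega
        subst hs'e
        exact ⟨b :: z, suffix_rfl, by rw [hse, psiL_cons, if_pos rfl, append_assoc]⟩
      · rw [if_neg hb] at hw
        rcases w with _ | ⟨x, _ | ⟨y, rest⟩⟩
        · simp at hw
          subst hw
          refine ⟨b :: z, suffix_rfl, ?_⟩
          rw [hse, psiL_cons, if_neg hb, append_assoc]
        · exfalso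
          have hx : s' = [b] := by
            simp at hw
            exact hw.2
          rw [hx] at hse
          simp at hse
          exact hb hse.1.symm
        · exfalso
          have h1 := congrArg List.length hw
          simp only [length_append, length_cons, length_nil] at h1
          have h2 : s'.length ≠ 0 := by simpa [List.length_eq_zero_iff] using hs'ne
          omega

/-- Every suffix of ψ_a(z) beginning with `c ≠ a` has the form c·ψ_a(t) with c·t a suffix of z. -/
theorem psiL_suffix_c (a c : A) (hca : c ≠ a) (z : List A) : ∀ s : List A,
    (c :: s) <:+ psiL a z → ∃ t, (c :: t) <:+ z ∧ s = psiL a t := by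
  induction z with
  | nil =>
    intro s hs
    rw [psiL_nil] at hs
    have := hs.length_le
    simp at this
  | cons b z ih =>
    intro s hs
    rw [psiL_cons] at hs
    rcases suffix_append_split hs with h | ⟨s', hs'x, hs'ne, hse⟩
    · obtain ⟨t, ht, he⟩ := ih s h
      exact ⟨t, ht.trans (suffix_cons b z), he⟩
    · obtain ⟨w, hw⟩ := hs'x
      by_cases hb : b = a
      · exfalso
        rw [if_pos hb] at hw
        have hs'e : s' = [a] := by
          cases w with
          | nil => simpa using hw
          | cons x w =>
            exfalso
            have h1 := congrArg List.length hw
            simp only [length_append, length_cons, length_nil] at h1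
            have h2 : s'.length ≠ 0 := by simpa [List.length_eq_zero_iff] using hs'ne
            omega
        rw [hs'e] at hse
        simp at hse
        exact hca hse.1
      · rw [if_neg hb] at hw
        rcases w with _ | ⟨x, _ | ⟨y, rest⟩⟩
        · exfalso
          have hw2 : s' = [a, b] := hw
          rw [hw2] at hse
          injection hse with h1 _
          exact hca h1
        · have hx : s' = [b] := by
            simp at hw
            exact hw.2
          rw [hx] at hse
          simp at hse
          obtain ⟨hcb, hsz⟩ := hse
          exact ⟨z, by rw [hcb], hsz⟩
        · exfalso
          have h1 := congrArg List.length hw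
          simp only [length_append, length_cons, length_nil] at h1
          have h2 : s'.length ≠ 0 := by simpa [List.length_eq_zero_iff] using hs'ne
          omega

theorem strip_pal {c : A} {m : List A} (h : (c :: (m ++ [c])).reverse = c :: (m ++ [c])) :
    m.reverse = m := by
  have h' : c :: (m.reverse ++ [c]) = c :: (m ++ [c]) := by
    rw [← h, reverse_cons, reverse_append]
    simp
  injection h' with _ h2
  exact append_cancel_right h2

end PsiPal

section Key
variable {A : Type*} [DecidableEq A]

theorem psiL_take_len (a : A) (p : List A) (k : ℕ) :
    (psiL a (p.take k)).length + (psiL a (p.drop k)).length = (psiL a p).length := by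
  rw [← length_append, ← psiL_append, take_append_drop]

theorem psiL_suffix_len_le (a : A) {t t₀ : List A} (h : t <:+ t₀) :
    (psiL a t).length ≤ (psiL a t₀).length := by
  obtain ⟨w, rfl⟩ := h
  rw [psiL_append, length_append]
  omega

theorem wrap_pal {c : A} {t : List A} (ht : t.reverse = t) :
    ((c :: (t ++ [c])) : List A).reverse = c :: (t ++ [c]) := by
  rw [reverse_cons, reverse_append, ht]
  simp

theorem pal_of_psiL_concat_pal {a : A} {t : List A}
    (h : (psiL a t ++ [a]).reverse = psiL a t ++ [a]) : t.reverse = t := by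
  rw [psiL_rev] at h
  exact psiL_inj a _ _ (append_cancel_right h)

/-- KEY LEMMA: `(ψ_a(p)·a·c)⁺ = ψ_a((p·c)⁺)·a` for a palindrome `p`. -/
theorem palPlus_psiL (a c : A) (p : List A) (hp : p.reverse = p) :
    palPlus (psiL a p ++ [a, c]) = psiL a (palPlus (p ++ [c])) ++ [a] := by
  set q : List A := psiL a p ++ [a, c] with hq
  set PC : List A := palPlus (p ++ [c]) with hPC
  have hqlen : q.length = (psiL a p).length + 2 := by simp [hq]
  have hPCpal : PC.reverse = PC := palPlus_rev _
  have hPCpre : (p ++ [c]) <+: PC := palPlus_prefix _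
  have hdropc : ((p ++ [c]).drop p.length).reverse = (p ++ [c]).drop p.length := by
    rw [drop_left]
    simp
  have hPCle : PC.length ≤ (p ++ [c]).length + p.length :=
    palPlus_length_le (p ++ [c]) p.length (by simp) hdropc
  have hPCge : (p ++ [c]).length ≤ PC.length := hPCpre.length_le
  obtain ⟨hPCeq, hPCmid⟩ := pal_prefix_struct (p ++ [c]) PC hPCpal hPCpre
    (by simp at hPCle ⊢; omega)
  set k₀ : ℕ := PC.length - (p ++ [c]).length with hk0
  have hk0le : k₀ ≤ p.length := by simp [hk0, length_append] at hPCle ⊢; omega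
  have htake0 : (p ++ [c]).take k₀ = p.take k₀ := by
    rw [List.take_append, Nat.sub_eq_zero_of_le hk0le, take_zero, append_nil]
  have hdrop0 : (p ++ [c]).drop k₀ = p.drop k₀ ++ [c] := by
    rw [List.drop_append, Nat.sub_eq_zero_of_le hk0le, drop_zero]
  have hk0min : ∀ j, j ≤ (p ++ [c]).length →
      ((p ++ [c]).drop j).reverse = (p ++ [c]).drop j → k₀ ≤ j := by
    intro j hjle hj
    have hple := palPlus_length_le (p ++ [c]) j hjle hj
    rw [← hPC] at hple
    omega
  set R : List A := psiL a PC ++ [a] with hR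
  have hRpal : R.reverse = R := psiL_pal a PC hPCpal
  -- decomposition of R
  have hRsplit : R = psiL a p ++ psiL a [c] ++ psiL a ((p.take k₀).reverse) ++ [a] := by
    rw [hR, hPCeq, htake0, psiL_append, psiL_append]
  have hFtk : (psiL a ((p.take k₀).reverse)).length = (psiL a (p.take k₀)).length :=
    psiL_length_rev a _
  have hsum : (psiL a (p.take k₀)).length + (psiL a (p.drop k₀)).length
      = (psiL a p).length := psiL_take_len a p k₀
  -- prefix
  have hqR : q <+: R := by
    rw [hRsplit, hq]
    by_cases hca : c = a
    · subst hca
      rw [psiL_single, if_pos rfl]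
      rcases hmm : (p.take k₀).reverse with _ | ⟨e, m'⟩
      · rw [psiL_nil]
        exact ⟨[], by simp⟩
      · obtain ⟨t', ht'⟩ := psiL_head c e m'
        rw [ht']
        exact ⟨t' ++ [c], by simp⟩
    · rw [psiL_single, if_neg hca]
      exact ⟨psiL a ((p.take k₀).reverse) ++ [a], by simp⟩
  -- lengths of R
  have hlc : (psiL a [c]).length ≤ 2 := by
    rw [psiL_single]; split <;> simp
  have hRlen : R.length = (psiL a p).length + (psiL a [c]).length
      + (psiL a (p.take k₀)).length + 1 := by
    rw [hRsplit]; simp [hFtk]; omega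
  have htk_le : (psiL a (p.take k₀)).length ≤ (psiL a p).length := by omega
  have hRle : R.length ≤ 2 * q.length - 1 := by omega
  -- minimality
  have hmin : ∀ Q : List A, Q.reverse = Q → q <+: Q → R.length ≤ Q.length := by
    intro Q hQpal hQpre
    by_cases hQbig : 2 * q.length ≤ Q.length
    · omega
    · push_neg at hQbig
      have hQge : q.length ≤ Q.length := hQpre.length_le
      obtain ⟨hQeq, hQmid⟩ := pal_prefix_struct q Q hQpal hQpre (le_of_lt hQbig)
      set k : ℕ := Q.length - q.length with hkdef
      set s : List A := q.drop k with hsdef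
      have hslen : s.length = q.length - k := by simp [hsdef]
      have hkle : k ≤ q.length := by omega
      have hssuf : s <:+ q := drop_suffix _ _
      by_cases hk : k = q.length
      · -- s empty, |Q| = 2|q|
        omega
      · -- s is a nonempty palindromic suffix of q
        have hsne : 1 ≤ s.length := by omega
        -- q ends with c, so s ends with c, and being a palindrome starts with c
        have hqc : q = (psiL a p ++ [a]) ++ [c] := by rw [hq]; simp
        have hcs : [c] <:+ s := by
          refine List.suffix_of_suffix_length_le ?_ hssuf (by simpa using hsne)
          rw [hqc]; exact suffix_append _ _
        obtain ⟨s₁, hs₁⟩ := hcs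
        have hshead : s = c :: s₁.reverse := by
          conv_lhs => rw [← hQmid]
          rw [← hs₁, reverse_append]
          simp
        by_cases hca : c = a
        · -- CASE c = a
          subst hca
          have hqa : q = psiL c (p ++ [c]) ++ [c] := by
            rw [hq, psiL_append, psiL_single, if_pos rfl]
            simp
          have hs_suff : (c :: s₁.reverse) <:+ psiL c (p ++ [c]) ++ [c] := by
            rw [← hshead, ← hqa]; exact hssuf
          obtain ⟨t, htsuf, hteq⟩ := psiL_suffix_a c (p ++ [c]) s₁.reverse hs_suff
          have htpal : t.reverse = t := by
            apply pal_of_psiL_concat_pal (a := c)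
            rw [← hteq, ← hshead]
            exact hQmid
          -- t is a palindromic suffix of p ++ [c]; compare with k₀-suffix
          set j : ℕ := (p ++ [c]).length - t.length with hjdef
          have htj : t = (p ++ [c]).drop j := suffix_iff_eq_drop.mp htsuf
          have hjle : j ≤ (p ++ [c]).length := by omega
          have hk0j : k₀ ≤ j := hk0min j hjle (by rw [← htj, htpal])
          have htt0 : t <:+ (p ++ [c]).drop k₀ := by
            rw [htj, ← Nat.sub_add_cancel hk0j, Nat.add_comm, ← List.drop_drop]
            exact drop_suffix _ _
          have hFle : (psiL c t).length ≤ (psiL c ((p ++ [c]).drop k₀)).length :=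
            psiL_suffix_len_le c htt0
          have hFd : (psiL c ((p ++ [c]).drop k₀)).length
              = (psiL c (p.drop k₀)).length + 1 := by
            rw [hdrop0, psiL_append, psiL_single, if_pos rfl]
            simp
          have hslen2 : s.length = (psiL c t).length + 1 := by
            rw [hshead, hteq]; simp
          have hlc1 : (psiL c [c]).length = 1 := by rw [psiL_single, if_pos rfl]; rfl
          omega
        · -- CASE c ≠ a
          by_cases hs1 : s.length = 1
          · -- s = [c]
            have hFd : (psiL a ((p ++ [c]).drop k₀)).length
                = (psiL a (p.drop k₀)).length + 2 := by
              rw [hdrop0, psiL_append, psiL_single, if_neg hca]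
              simp
            have hlc2 : (psiL a [c]).length = 2 := by rw [psiL_single, if_neg hca]; rfl
            omega
          · -- |s| ≥ 2; in fact ≥ 3 since [a,c] is not a palindrome
            have hs2 : 2 ≤ s.length := by omega
            have hs3 : 3 ≤ s.length := by
              rcases Nat.lt_or_ge s.length 3 with h3 | h3
              · -- s.length = 2 : s = [a, c], palindrome forces a = c
                exfalso
                have hsac : s = [a, c] := by
                  have : s.length = 2 := by omega
                  have h4 : s <:+ (psiL a p ++ [a, c]) := by rw [← hq]; exact hssuf
                  have h5 : ([a, c] : List A) <:+ psiL a p ++ [a, c] := suffix_append _ _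
                  have h6 := List.suffix_of_suffix_length_le h4 h5 (by simp [this])
                  exact List.IsSuffix.eq_of_length h6 (by simp [this])
                rw [hsac] at hshead
                have : c = a := by
                  have := (List.cons.injEq _ _ _ _).mp hshead
                  exact this.1.symm
                exact hca this
              · exact h3
            -- decompose s = s₃ ++ [a, c] with s₃ nonempty suffix of psiL a p
            have hsq : s <:+ psiL a p ++ [a, c] := by rw [← hq]; exact hssuf
            rcases suffix_append_split hsq with hbad | ⟨s₃, hs₃suf, hs₃ne, hs₃eq⟩
            · exfalso
              have := hbad.length_le
              simp at this
              omega
            · -- s₃ starts with c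
              obtain ⟨e, s₄, hs₄⟩ : ∃ e s₄, s₃ = e :: s₄ := by
                rcases s₃ with _ | ⟨e, s₄⟩
                · exact absurd rfl hs₃ne
                · exact ⟨e, s₄, rfl⟩
              have hec : e = c := by
                rw [hs₃eq, hs₄] at hshead
                exact ((List.cons.injEq _ _ _ _).mp hshead).1
              rw [hs₄, hec] at hs₃suf hs₃eq
              obtain ⟨t, htsuf, hteq⟩ := psiL_suffix_c a c hca p s₄ hs₃suf
              -- s = c :: (psiL a t ++ [a]) ++ [c]  (as c :: ((psiL a t ++ [a]) ++ [c]))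
              have hsform : s = c :: ((psiL a t ++ [a]) ++ [c]) := by
                rw [hs₃eq, hteq]
                simp
              have hmidpal : (psiL a t ++ [a]).reverse = psiL a t ++ [a] := by
                apply strip_pal (c := c)
                rw [← hsform]
                exact hQmid
              have htpal : t.reverse = t := pal_of_psiL_concat_pal hmidpal
              -- tc := c :: (t ++ [c]) is a palindromic suffix of p ++ [c]
              have htcsuf : (c :: t) ++ [c] <:+ p ++ [c] := by
                obtain ⟨w, hw⟩ := htsuf
                exact ⟨w, by rw [← append_assoc, hw]⟩
              have htcpal : ((c :: t) ++ [c]).reverse = (c :: t) ++ [c] := by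
                rw [cons_append]
                exact wrap_pal htpal
              set j : ℕ := (p ++ [c]).length - ((c :: t) ++ [c]).length with hjdef
              have htj : (c :: t) ++ [c] = (p ++ [c]).drop j := suffix_iff_eq_drop.mp htcsuf
              have hjle : j ≤ (p ++ [c]).length := by omega
              have hk0j : k₀ ≤ j := hk0min j hjle (by rw [← htj]; exact htcpal)
              have htt0 : (c :: t) ++ [c] <:+ (p ++ [c]).drop k₀ := by
                rw [htj, ← Nat.sub_add_cancel hk0j, Nat.add_comm, ← List.drop_drop]
                exact drop_suffix _ _
              have hFle : (psiL a ((c :: t) ++ [c])).length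
                  ≤ (psiL a ((p ++ [c]).drop k₀)).length := psiL_suffix_len_le a htt0
              have hFtc : (psiL a ((c :: t) ++ [c])).length = (psiL a t).length + 4 := by
                rw [cons_append, psiL_cons, if_neg hca, psiL_append, psiL_single, if_neg hca]
                simp
              have hFd : (psiL a ((p ++ [c]).drop k₀)).length
                  = (psiL a (p.drop k₀)).length + 2 := by
                rw [hdrop0, psiL_append, psiL_single, if_neg hca]
                simp
              have hslen2 : s.length = (psiL a t).length + 3 := by
                rw [hsform]; simp
              have hlc2 : (psiL a [c]).length = 2 := by rw [psiL_single, if_neg hca]; rfl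
              omega
  -- conclude
  exact palPlus_eq_of q R hRpal hqR (by omega) hmin

end Key

section Justin
variable {A : Type*} [DecidableEq A]

theorem pal_nil : pal ([] : List A) = [] := rfl

theorem pal_snoc (u : List A) (c : A) : pal (u ++ [c]) = palPlus (pal u ++ [c]) := by
  unfold pal
  rw [foldl_append]
  rfl

theorem pal_palindrome (u : List A) : (pal u).reverse = pal u := by
  induction u using List.reverseRecOn with
  | nil => rfl
  | append_singleton v c ih => rw [pal_snoc]; exact palPlus_rev _

theorem palPlus_single (x : A) : palPlus [x] = [x] := by
  refine palPlus_eq_of [x] [x] (by simp) prefix_rfl (by simp) ?_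
  intro Q _ hpre
  simpa using hpre.length_le

theorem pal_single (x : A) : pal [x] = [x] := by
  have : ([x] : List A) = [] ++ [x] := by simp
  rw [this, pal_snoc, pal_nil, nil_append, palPlus_single]

/-- J0: Pal(x·v) = ψ_x(Pal v)·x -/
theorem pal_cons (x : A) (v : List A) : pal (x :: v) = psiL x (pal v) ++ [x] := by
  induction v using List.reverseRecOn with
  | nil => rw [pal_single, pal_nil, psiL_nil, nil_append]
  | append_singleton v' c ih =>
    have h1 : x :: (v' ++ [c]) = (x :: v') ++ [c] := by simp
    rw [h1, pal_snoc, ih, pal_snoc]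
    have h2 : psiL x (pal v') ++ [x] ++ [c] = psiL x (pal v') ++ [x, c] := by simp
    rw [h2, palPlus_psiL x c (pal v') (pal_palindrome v')]

/-- J1 (Justin's formula): Pal(u·c) = ψ_u(c)·Pal(u) -/
theorem justin (u : List A) (c : A) : pal (u ++ [c]) = psiW u [c] ++ pal u := by
  induction u generalizing c with
  | nil => rw [nil_append, pal_single, pal_nil, psiW_nil]; rfl
  | cons x u ih =>
    have h1 : (x :: u) ++ [c] = x :: (u ++ [c]) := by simp
    rw [h1, pal_cons, ih c, psiL_append, pal_cons, psiW_cons]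
    simp

/-- J3: ψ_u(c)·Pal(u) = Pal(u)·(ψ_u(c))ʳ -/
theorem justin_conj (u : List A) (c : A) :
    psiW u [c] ++ pal u = pal u ++ (psiW u [c]).reverse := by
  have h := pal_palindrome (u ++ [c])
  rw [justin] at h
  conv_lhs => rw [← h]
  rw [reverse_append, pal_palindrome]

/-- Sum formula: Σ_c |ψ_u(c)| = (n-1)·|Pal u| + n -/
theorem sum_psiW (A : Type*) [DecidableEq A] [Fintype A] (hA : 1 ≤ Fintype.card A)
    (u : List A) :
    ∑ c : A, (psiW u [c]).length = (Fintype.card A - 1) * (pal u).length + Fintype.card A := by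
  obtain ⟨m, hm⟩ : ∃ m, Fintype.card A = m + 1 := ⟨Fintype.card A - 1, by omega⟩
  induction u using List.reverseRecOn with
  | nil =>
    simp [psiW_nil, pal_nil]
  | append_singleton u x ih =>
    have hsplit : ∀ c : A, (psiW (u ++ [x]) [c]).length
        = (psiW u [x]).length + (if c = x then 0 else (psiW u [c]).length) := by
      intro c
      rw [psiW_append]
      simp only [Function.comp_apply]
      have hx : psiW [x] [c] = psiL x [c] := rfl
      rw [hx, psiL_single]
      by_cases h : c = x
      · rw [if_pos h, if_pos h]
        simp
      · rw [if_neg h, if_neg h]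
        have h2 : ([x, c] : List A) = [x] ++ [c] := rfl
        rw [h2, psiW_hom]
        simp
    have hpt : ∀ c : A, (psiW (u ++ [x]) [c]).length + (if c = x then (psiW u [x]).length else 0)
        = (psiW u [x]).length + (psiW u [c]).length := by
      intro c
      rw [hsplit c]
      by_cases h : c = x
      · rw [if_pos h, if_pos h, h]
        omega
      · rw [if_neg h, if_neg h]
        omega
    have key : (∑ c : A, (psiW (u ++ [x]) [c]).length) + (psiW u [x]).length
        = Fintype.card A * (psiW u [x]).length + ∑ c : A, (psiW u [c]).length := by
      have h1 := Finset.sum_congr rfl (fun c (_ : c ∈ Finset.univ) => hpt c)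
      rw [Finset.sum_add_distrib, Finset.sum_ite_eq' Finset.univ x
        (fun _ => (psiW u [x]).length)] at h1
      simp only [Finset.mem_univ, if_pos] at h1
      rw [h1, Finset.sum_add_distrib, Finset.sum_const, Finset.card_univ, smul_eq_mul]
    have hlen : (pal (u ++ [x])).length = (psiW u [x]).length + (pal u).length := by
      rw [justin, length_append]
    rw [hlen, hm] at *
    simp only [Nat.add_sub_cancel] at *
    rw [Nat.add_mul, Nat.one_mul] at key
    rw [Nat.mul_add]
    omega

end Justin

section Lang
variable {A : Type*}

theorem hom_nil {σ : List A → List A} (h : IsListHom σ) : σ [] = [] := by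
  have h0 := h [] []
  have hl := congrArg List.length h0
  simp only [nil_append, length_append] at hl
  rw [← List.length_eq_zero_iff]
  omega

theorem hom_iterate {σ : List A → List A} (h : IsListHom σ) (n : ℕ) :
    IsListHom (σ^[n]) := by
  induction n with
  | zero => intro x y; simp
  | succ n ih =>
    intro x y
    rw [Function.iterate_succ_apply', Function.iterate_succ_apply',
      Function.iterate_succ_apply', ih x y, h]

theorem hom_infix {σ : List A → List A} (h : IsListHom σ) {x y : List A}
    (hxy : x <:+: y) : σ x <:+: σ y := by
  obtain ⟨l, r, hlr⟩ := hxy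
  exact ⟨σ l, σ r, by rw [← h, ← h, hlr]⟩

theorem LangS_factor {σ : List A → List A} {x y : List A} (hxy : x <:+: y)
    (hy : y ∈ LangS σ) : x ∈ LangS σ := by
  obtain ⟨n, a, hn⟩ := hy
  exact ⟨n, a, hxy.trans hn⟩

theorem LangS_sigma {σ : List A → List A} (h : IsListHom σ) {x : List A}
    (hx : x ∈ LangS σ) : σ x ∈ LangS σ := by
  obtain ⟨n, a, hn⟩ := hx
  refine ⟨n + 1, a, ?_⟩
  rw [Function.iterate_succ_apply']
  exact hom_infix h hn

theorem iter_single_ne_nil {σ : List A → List A} (h : IsListHom σ)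
    (hne : ∀ a : A, σ [a] ≠ []) : ∀ (n : ℕ) (a : A), σ^[n] [a] ≠ [] := by
  intro n
  induction n with
  | zero => intro a; simp
  | succ n ih =>
    intro a
    rw [Function.iterate_succ_apply']
    intro hcon
    rcases hex : σ^[n] [a] with _ | ⟨b, rest⟩
    · exact ih a hex
    · have h2 : σ^[n] [a] = [b] ++ rest := by rw [hex]; rfl
      rw [h2, h] at hcon
      have := List.append_eq_nil_iff.mp hcon
      exact hne b this.1

/-- every word in the language of a primitive substitution with nonempty letter
images is left-extendable -/
theorem LangS_left_ext {σ : List A → List A} (h : IsListHom σ)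
    (hne : ∀ a : A, σ [a] ≠ []) (hprim : IsPrimitiveSubst σ)
    (hcard : ∃ a b : A, a ≠ b) {x : List A} (hx : x ∈ LangS σ) :
    ∃ c : A, (c :: x) ∈ LangS σ := by
  obtain ⟨n, a, l, r, hlr⟩ := hx
  obtain ⟨k, hk1, hk⟩ := hprim
  obtain ⟨d, e, rest, hde⟩ : ∃ d e rest, σ^[k] [a] = d :: e :: rest := by
    obtain ⟨a0, b0, hab⟩ := hcard
    rcases hl : σ^[k] [a] with _ | ⟨d, _ | ⟨e, rest⟩⟩
    · exact absurd (hl ▸ hk a a0) (by simp)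
    · have h1 := hl ▸ hk a a0
      have h2 := hl ▸ hk a b0
      simp at h1 h2
      exact absurd (h1.trans h2.symm) hab
    · exact ⟨d, e, rest, rfl⟩
  have hsplit : σ^[k+k] [a] = σ^[k] [d] ++ σ^[k] ([e] ++ rest) := by
    rw [Function.iterate_add_apply, hde,
      show (d :: e :: rest : List A) = [d] ++ ([e] ++ rest) by simp,
      hom_iterate h k]
  obtain ⟨l1, r1, hl1⟩ : ∃ l1 r1, σ^[k] [e] = l1 ++ [a] ++ r1 := by
    have hmem := hk e a
    obtain ⟨s1, s2, hs⟩ := List.append_of_mem hmem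
    exact ⟨s1, s2, by rw [hs]; simp⟩
  have hWne : (σ^[k] [d] ++ l1) ≠ [] := by
    intro hcon
    exact iter_single_ne_nil h hne k d (List.append_eq_nil_iff.mp hcon).1
  obtain ⟨W, c2, hW⟩ := (List.eq_nil_or_concat (σ^[k] [d] ++ l1)).resolve_left hWne
  have hW' : σ^[k] [d] ++ l1 = W ++ [c2] := by rw [hW, concat_eq_append]
  have hocc : σ^[k+k] [a] = (W ++ [c2]) ++ ([a] ++ (r1 ++ σ^[k] rest)) := by
    rw [hsplit, hom_iterate h k [e] rest, hl1, ← hW']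
    simp
  obtain ⟨V, c3, hV⟩ := (List.eq_nil_or_concat (σ^[n] [c2] ++ l)).resolve_left
    (by intro hcon; exact iter_single_ne_nil h hne n c2 (List.append_eq_nil_iff.mp hcon).1)
  have hV' : σ^[n] [c2] ++ l = V ++ [c3] := by rw [hV, concat_eq_append]
  have hZ : σ^[n + (k+k)] [a]
      = σ^[n] W ++ σ^[n] [c2] ++ (l ++ x ++ r) ++ σ^[n] (r1 ++ σ^[k] rest) := by
    rw [Function.iterate_add_apply, hocc,
      hom_iterate h n (W ++ [c2]) ([a] ++ (r1 ++ σ^[k] rest)),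
      hom_iterate h n W [c2], hom_iterate h n [a] (r1 ++ σ^[k] rest), ← hlr]
    simp
  refine ⟨c3, n + (k+k), a, σ^[n] W ++ V, r ++ σ^[n] (r1 ++ σ^[k] rest), ?_⟩
  rw [hZ, show σ^[n] W ++ σ^[n] [c2] ++ (l ++ x ++ r) ++ σ^[n] (r1 ++ σ^[k] rest)
      = σ^[n] W ++ (σ^[n] [c2] ++ l) ++ ((x ++ r) ++ σ^[n] (r1 ++ σ^[k] rest)) by simp, hV']
  simp

end Lang

section Min
variable {A : Type*} [DecidableEq A]

theorem psiW_min (u : List A) (hu : u ≠ []) :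
    ∃ c₀ : A, ∀ c : A, psiW u [c₀] <+: psiW u [c] ∧
      (c ≠ c₀ → (psiW u [c₀]).length < (psiW u [c]).length) := by
  induction u with
  | nil => exact absurd rfl hu
  | cons x u ih =>
    by_cases hun : u = []
    · subst hun
      refine ⟨x, fun c => ?_⟩
      have hx : psiW [x] [c] = psiL x [c] := rfl
      have hx0 : psiW [x] [x] = psiL x [x] := rfl
      constructor
      · rw [hx, hx0, psiL_single, psiL_single, if_pos rfl]
        by_cases h : c = x
        · rw [if_pos h]
        · rw [if_neg h]
          exact ⟨[c], rfl⟩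
      · intro hc
        rw [hx, hx0, psiL_single, psiL_single, if_pos rfl, if_neg hc]
        simp
    · obtain ⟨c₀, hc₀⟩ := ih hun
      refine ⟨c₀, fun c => ?_⟩
      obtain ⟨hpre, hlt⟩ := hc₀ c
      obtain ⟨dd, hdd⟩ := hpre
      have hshow : psiW (x :: u) [c] = psiL x (psiW u [c]) := rfl
      have hshow0 : psiW (x :: u) [c₀] = psiL x (psiW u [c₀]) := rfl
      constructor
      · rw [hshow, hshow0, ← hdd, psiL_append]
        exact ⟨psiL x dd, rfl⟩
      · intro hc
        have hddne : dd ≠ [] := by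
          intro hnil
          rw [hnil, append_nil] at hdd
          have := hlt hc
          rw [hdd] at this
          omega
        have hdd1 : 1 ≤ dd.length := List.length_pos_iff.mpr hddne
        have hdd2 := psiL_length_ge x dd
        rw [hshow, hshow0, ← hdd, psiL_append, length_append]
        omega

end Min


/-- (1) if |w| = |σ(a_min)| then σ(a_min·v) is left special for every
left special v; (2) if (|A|-1)·|w| = ‖σ‖-|A| then σ(a_min·v) ∈ L(σ) and is right
special for every right special v. -/
theorem image_of_special_with_minletter_left {A : Type*} [Fintype A] [DecidableEq A]
    (hA : 1 < Fintype.card A) (u : List A) (hu : u ≠ []) (π : Equiv.Perm A)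
    (w : List A) (hw : w <+: pal u)
    (σ : List A → List A) (hσhom : IsListHom σ)
    (hσ : ∀ a : A, psiW u [π a] ++ w = w ++ σ [a])
    (hprim : IsPrimitiveSubst σ)
    (amin : A) (hmin : ∀ a : A, a ≠ amin → (σ [amin]).length < (σ [a]).length) :
    (w.length = (σ [amin]).length →
      ∀ v : List A, LeftSpecial (LangS σ) v →
        LeftSpecial (LangS σ) (σ (amin :: v))) ∧
    ((Fintype.card A - 1) * w.length = (∑ a : A, (σ [a]).length) - Fintype.card A →
      ∀ v : List A, RightSpecial (LangS σ) v →
        σ (amin :: v) ∈ LangS σ ∧ RightSpecial (LangS σ) (σ (amin :: v))) := by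
  classical
  have hpair : ∃ a b : A, a ≠ b := Fintype.exists_pair_of_one_lt_card hA
  have hσa_len : ∀ a : A, (σ [a]).length = (psiW u [π a]).length := by
    intro a
    have hl := congrArg List.length (hσ a)
    simp only [length_append] at hl
    omega
  have hσ_sum : ∑ a : A, (σ [a]).length = ∑ c : A, (psiW u [c]).length := by
    rw [Finset.sum_congr rfl (fun a (_ : a ∈ Finset.univ) => hσa_len a)]
    exact Equiv.sum_comp π (fun c => (psiW u [c]).length)
  have hcons : ∀ (a : A) (v' : List A), σ (a :: v') = σ [a] ++ σ v' := by
    intro a v'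
    have := hσhom [a] v'
    simpa using this
  constructor
  · -- PART 1
    intro hw1 v hv
    have h1 := hσ amin
    have hlen1 : (psiW u [π amin]).length = w.length := by
      have := hσa_len amin
      omega
    obtain ⟨hw_eq, hσmin⟩ := List.append_inj h1 hlen1
    have hwne : w ≠ [] := by
      rw [← hw_eq]
      exact psiW_ne_nil u (π amin)
    have hσne : ∀ a : A, σ [a] ≠ [] := by
      intro a hnil
      by_cases ha : a = amin
      · rw [ha, ← hσmin] at hnil
        exact hwne hnil
      · have hlt := hmin a ha
        rw [hnil] at hlt
        simp at hlt
    have hdec : ∀ a : A, a ≠ amin → ∃ z, σ [a] = (z ++ [π a]) ++ w := by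
      intro a ha
      have h2 := hσ a
      have hstrict : w.length < (psiW u [π a]).length := by
        have := hmin a ha
        have := hσa_len a
        omega
      have hwpre : w <+: psiW u [π a] := by
        apply prefix_of_prefix_length_le (l₃ := w ++ σ [a])
        · exact prefix_append _ _
        · rw [← h2]
          exact prefix_append _ _
        · omega
      obtain ⟨t, ht⟩ := hwpre
      have htw : σ [a] = t ++ w := by
        have h3 : w ++ (t ++ w) = w ++ σ [a] := by
          rw [← append_assoc, ht, h2]
        exact (append_cancel_left h3).symm
      obtain ⟨Z, hZ⟩ := psiW_single_concat u (π a)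
      have htne : t ≠ [] := by
        intro hnil
        rw [hnil, append_nil] at ht
        rw [ht] at hstrict
        omega
      obtain ⟨t', e, hte⟩ := (List.eq_nil_or_concat t).resolve_left htne
      rw [concat_eq_append] at hte
      have hkey : (w ++ t') ++ [e] = Z ++ [π a] := by
        rw [append_assoc, ← hte, ht, hZ]
      have hlen' : (w ++ t').length = Z.length := by
        have hl2 := congrArg List.length hkey
        simp only [length_append, length_cons, length_nil] at hl2 ⊢
        omega
      have he : e = π a := by
        have := (List.append_inj hkey hlen').2
        simpa using this
      exact ⟨t', by rw [htw, hte, he]⟩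
    obtain ⟨Zm, hZm⟩ := psiW_single_concat u (π amin)
    have hwend : w = Zm ++ [π amin] := by rw [← hw_eq, hZm]
    have hσav : σ (amin :: v) = w ++ σ v := by rw [hcons, ← hσmin]
    obtain ⟨a, b, hab, hav, hbv⟩ := hv
    -- sub-lemma for letters ≠ amin
    have subne : ∀ a : A, a ≠ amin → (a :: v) ∈ LangS σ →
        (π a :: (w ++ σ v)) ∈ LangS σ := by
      intro a ha hmem
      have hσm := LangS_sigma hσhom hmem
      obtain ⟨z, hz⟩ := hdec a ha
      apply LangS_factor (y := σ (a :: v)) _ hσm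
      rw [hcons a v, hz]
      exact ⟨z, [], by simp⟩
    -- sub-lemma for amin
    have submin : (amin :: v) ∈ LangS σ → (π amin :: (w ++ σ v)) ∈ LangS σ := by
      intro hmem
      obtain ⟨c, hc⟩ := LangS_left_ext hσhom hσne hprim hpair hmem
      have hσm := LangS_sigma hσhom hc
      have hcform : ∃ y, σ [c] = y ++ [π amin] := by
        by_cases hcm : c = amin
        · exact ⟨Zm, by rw [hcm, ← hσmin, hwend]⟩
        · obtain ⟨z, hz⟩ := hdec c hcm
          exact ⟨(z ++ [π c]) ++ Zm, by rw [hz, hwend]; simp⟩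
      obtain ⟨y, hy⟩ := hcform
      apply LangS_factor (y := σ (c :: amin :: v)) _ hσm
      rw [hcons c (amin :: v), hcons amin v, ← hσmin, hy]
      exact ⟨y, [], by simp⟩
    rw [hσav]
    by_cases ham : a = amin
    · have hbm : b ≠ amin := fun hcon => hab (by rw [ham, hcon])
      refine ⟨π amin, π b, (Equiv.injective π).ne (fun hcon => hbm hcon.symm), ?_, ?_⟩
      · exact submin (ham ▸ hav)
      · exact subne b hbm hbv
    · by_cases hbm : b = amin
      · refine ⟨π amin, π a, (Equiv.injective π).ne (fun hcon => ham hcon.symm), ?_, ?_⟩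
        · exact submin (hbm ▸ hbv)
        · exact subne a ham hav
      · refine ⟨π a, π b, (Equiv.injective π).ne hab, ?_, ?_⟩
        · exact subne a ham hav
        · exact subne b hbm hbv
  · -- PART 2
    intro hw2 v hv
    have hsumW := sum_psiW A (by omega) u
    have h1 : ∑ a : A, (σ [a]).length
        = (Fintype.card A - 1) * (pal u).length + Fintype.card A := hσ_sum.trans hsumW
    have hwlen : w.length = (pal u).length := by
      rw [h1] at hw2
      have hc1 : 1 ≤ Fintype.card A - 1 := by omega
      have hw2' : (Fintype.card A - 1) * w.length
          = (Fintype.card A - 1) * (pal u).length := by omega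
      exact Nat.eq_of_mul_eq_mul_left (by omega) hw2'
    have hwpal : w = pal u := List.IsPrefix.eq_of_length hw hwlen
    have hσrev : ∀ a : A, σ [a] = (psiW u [π a]).reverse := by
      intro a
      have h2 := hσ a
      have h3 := justin_conj u (π a)
      rw [← hwpal] at h3
      exact append_cancel_left (h2.symm.trans h3)
    have hσne : ∀ a : A, σ [a] ≠ [] := by
      intro a hnil
      rw [hσrev a, reverse_eq_nil_iff] at hnil
      exact psiW_ne_nil u (π a) hnil
    have hσhead : ∀ a : A, ∃ z, σ [a] = (π a) :: z := by
      intro a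
      obtain ⟨Z, hZ⟩ := psiW_single_concat u (π a)
      exact ⟨Z.reverse, by rw [hσrev a, hZ, reverse_append]; rfl⟩
    obtain ⟨c₀, hc₀⟩ := psiW_min u hu
    have hπ : π amin = c₀ := by
      by_contra hne
      have ha1 : π.symm c₀ ≠ amin := by
        intro hcon
        rw [← hcon] at hne
        simp at hne
      have h4 := hmin _ ha1
      have h5 := (hc₀ (π amin)).2 hne
      have h6 := hσa_len (π.symm c₀)
      have h7 := hσa_len amin
      rw [Equiv.apply_symm_apply] at h6
      omega
    have hsuffix : ∀ a : A, σ [amin] <:+ σ [a] := by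
      intro a
      have hpre := (hc₀ (π a)).1
      rw [← hπ] at hpre
      rw [hσrev amin, hσrev a]
      exact List.reverse_suffix.mpr hpre
    obtain ⟨x, y, hxy, hvx, hvy⟩ := hv
    have hkey : ∀ x : A, (v ++ [x]) ∈ LangS σ →
        (σ [amin] ++ σ v) ++ [π x] ∈ LangS σ := by
      intro x hmem
      obtain ⟨c, hc⟩ := LangS_left_ext hσhom hσne hprim hpair hmem
      have hσm := LangS_sigma hσhom hc
      obtain ⟨z1, hz1⟩ := hsuffix c
      obtain ⟨z2, hz2⟩ := hσhead x
      apply LangS_factor (y := σ (c :: (v ++ [x]))) _ hσm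
      rw [hcons c (v ++ [x]), hσhom v [x], ← hz1, hz2]
      exact ⟨z1, z2, by simp⟩
    have hmemx := hkey x hvx
    have hmemy := hkey y hvy
    have hσav : σ (amin :: v) = σ [amin] ++ σ v := hcons amin v
    constructor
    · apply LangS_factor (y := (σ [amin] ++ σ v) ++ [π x]) _ hmemx
      rw [hσav]
      exact ⟨[], [π x], by simp⟩
    · refine ⟨π x, π y, (Equiv.injective π).ne hxy, ?_, ?_⟩
      · rw [hσav]; exact hmemx
      · rw [hσav]; exact hmemy
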